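/- arXiv:1801.04239 — 9 statements merged into one kernel-verified Lean document; each statement's English description precedes it below -/
import Mathlib

section
/- Let k be a commutative ring and R an associative k-algebra. Suppose R₁ and R₂ are k-submodules of R that are each closed under multiplication (nonunital subalgebras), and that R is the internal direct sum R = R₁ ⊕ R₂ as k-modules (R₁ + R₂ = R and R₁ ∩ R₂ = 0). Let P : R → R be the k-linear map determined by P(u₁ + u₂) = u₁ - u₂ for u₁ ∈ R₁ and u₂ ∈ R₂. Then P is involutive (P ∘ P = id) and P is a modified Rota-Baxter operator of weight -1 on R, i.e. P(u)P(v) = P(uP(v)) + P(P(u)v) - uv for all u, v ∈ R. -/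
/-- If `R = R₁ ⊕ R₂` as `k`-modules with `R₁`, `R₂` nonunital subalgebras, then the linear
map `P` with `P (u₁ + u₂) = u₁ - u₂` is involutive and a modified Rota-Baxter operator of
weight `-1`. -/
theorem stmt_2 {k R : Type*} [CommRing k] [Ring R] [Algebra k R]
    (R₁ R₂ : Submodule k R)
    (hR₁ : ∀ a ∈ R₁, ∀ b ∈ R₁, a * b ∈ R₁)
    (hR₂ : ∀ a ∈ R₂, ∀ b ∈ R₂, a * b ∈ R₂)
    (hsup : R₁ ⊔ R₂ = ⊤) (hinf : R₁ ⊓ R₂ = ⊥)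
    (P : R →ₗ[k] R)
    (hP : ∀ x ∈ R₁, ∀ y ∈ R₂, P (x + y) = x - y) :
    (∀ x : R, P (P x) = x) ∧
    (∀ u v : R, P u * P v = P (u * P v) + P (P u * v) - u * v) := by
  have decomp : ∀ x : R, ∃ a ∈ R₁, ∃ b ∈ R₂, x = a + b := by
    intro x
    have hx : x ∈ R₁ ⊔ R₂ := by rw [hsup]; trivial
    rcases Submodule.mem_sup.mp hx with ⟨a, ha, b, hb, h⟩
    exact ⟨a, ha, b, hb, h.symm⟩
  have key : ∀ x ∈ R₁, ∀ y ∈ R₂, P (x - y) = x + y := by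
    intro x hx y hy
    have := hP x hx (-y) (neg_mem hy)
    simpa [sub_eq_add_neg, sub_neg_eq_add] using this
  constructor
  · intro x
    rcases decomp x with ⟨a, ha, b, hb, rfl⟩
    rw [hP a ha b hb, key a ha b hb]
  · intro u v
    rcases decomp u with ⟨a, ha, b, hb, rfl⟩
    rcases decomp v with ⟨c, hc, d, hd, rfl⟩
    have hPu : P (a + b) = a - b := hP a ha b hb
    have hPv : P (c + d) = c - d := hP c hc d hd
    have h1 : (a + b) * P (c + d) + P (a + b) * (c + d)
        = (a * c - b * d) + (a * c - b * d) := by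
      rw [hPu, hPv]; noncomm_ring
    have h2 : P ((a + b) * P (c + d)) + P (P (a + b) * (c + d))
        = (a * c + b * d) + (a * c + b * d) := by
      rw [← map_add, h1, map_add, key _ (hR₁ a ha c hc) _ (hR₂ b hb d hd)]
    rw [h2, hPu, hPv]; noncomm_ring
end

section
/- Let k be a commutative ring in which 2 is invertible, R an associative k-algebra, and P : R → R a k-linear map with P ∘ P = id that is a modified Rota-Baxter operator of weight -1, i.e. P(u)P(v) = P(uP(v)) + P(P(u)v) - uv for all u, v ∈ R. Set R₁ := (id + P)(R) and R₂ := (id - P)(R). Then R₁ and R₂ are k-submodules of R closed under multiplication, R = R₁ ⊕ R₂ as k-modules (R₁ + R₂ = R and R₁ ∩ R₂ = 0), and P(u) = u for all u ∈ R₁ while P(u) = -u for all u ∈ R₂. -/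
/-- If `2` is invertible in `k` and `P` is an involutive modified Rota-Baxter operator of
weight `-1` on `R`, then `R₁ := (id + P)(R)` and `R₂ := (id - P)(R)` are nonunital
subalgebras, `R = R₁ ⊕ R₂` as `k`-modules, and `P` is the identity on `R₁` and minus the
identity on `R₂`. -/
theorem stmt_3 {k R : Type*} [CommRing k] [Ring R] [Algebra k R]
    (h2 : IsUnit (2 : k))
    (P : R →ₗ[k] R) (hinv : ∀ x : R, P (P x) = x)
    (hP : ∀ u v : R, P u * P v = P (u * P v) + P (P u * v) - u * v) :
    (∀ a ∈ LinearMap.range ((LinearMap.id : R →ₗ[k] R) + P),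
      ∀ b ∈ LinearMap.range ((LinearMap.id : R →ₗ[k] R) + P),
        a * b ∈ LinearMap.range ((LinearMap.id : R →ₗ[k] R) + P)) ∧
    (∀ a ∈ LinearMap.range ((LinearMap.id : R →ₗ[k] R) - P),
      ∀ b ∈ LinearMap.range ((LinearMap.id : R →ₗ[k] R) - P),
        a * b ∈ LinearMap.range ((LinearMap.id : R →ₗ[k] R) - P)) ∧
    (LinearMap.range ((LinearMap.id : R →ₗ[k] R) + P) ⊔
      LinearMap.range ((LinearMap.id : R →ₗ[k] R) - P) = ⊤) ∧
    (LinearMap.range ((LinearMap.id : R →ₗ[k] R) + P) ⊓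
      LinearMap.range ((LinearMap.id : R →ₗ[k] R) - P) = ⊥) ∧
    (∀ u ∈ LinearMap.range ((LinearMap.id : R →ₗ[k] R) + P), P u = u) ∧
    (∀ u ∈ LinearMap.range ((LinearMap.id : R →ₗ[k] R) - P), P u = -u) := by
  obtain ⟨c, hc⟩ : ∃ c : k, c * 2 = 1 := h2.exists_left_inv
  -- halving lemma
  have hhalf : ∀ z : R, c • (z + z) = z := by
    intro z
    have : c • ((2 : k) • z) = z := by
      rw [smul_smul, hc, one_smul]
    simpa [two_smul] using this
  have hcancel : ∀ z w : R, z + z = w + w → z = w := by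
    intro z w h
    rw [← hhalf z, h, hhalf]
  -- eigenvalue facts
  have fixP : ∀ u ∈ LinearMap.range ((LinearMap.id : R →ₗ[k] R) + P), P u = u := by
    rintro _ ⟨x, rfl⟩
    simp [hinv, add_comm]
  have negP : ∀ u ∈ LinearMap.range ((LinearMap.id : R →ₗ[k] R) - P), P u = -u := by
    rintro _ ⟨x, rfl⟩
    simp [hinv]
  have memfix : ∀ z : R, P z = z →
      z ∈ LinearMap.range ((LinearMap.id : R →ₗ[k] R) + P) := by
    intro z hz
    refine ⟨c • z, ?_⟩
    simp only [LinearMap.add_apply, LinearMap.id_coe, id_eq, map_smul, hz]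
    exact hhalf z
  have memneg : ∀ z : R, P z = -z →
      z ∈ LinearMap.range ((LinearMap.id : R →ₗ[k] R) - P) := by
    intro z hz
    refine ⟨c • z, ?_⟩
    simp only [LinearMap.sub_apply, LinearMap.id_coe, id_eq, map_smul, hz]
    rw [sub_neg_eq_add]
    exact hhalf z
  refine ⟨?_, ?_, ?_, ?_, fixP, negP⟩
  · -- R₁ closed under multiplication
    intro a ha b hb
    have h := hP a b
    rw [fixP a ha, fixP b hb, eq_sub_iff_add_eq] at h
    exact memfix _ (hcancel _ _ h.symm)
  · -- R₂ closed under multiplication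
    intro a ha b hb
    have h := hP a b
    rw [negP a ha, negP b hb] at h
    simp only [neg_mul_neg, mul_neg, neg_mul, map_neg] at h
    rw [eq_sub_iff_add_eq] at h
    -- h : a*b + a*b = -P (a*b) + -P (a*b)
    have key : P (a * b) + P (a * b) = -(a * b) + -(a * b) := by
      have := congrArg (fun t => -t) h
      simpa [neg_add, neg_neg] using this.symm
    exact memneg _ (hcancel _ _ key)
  · -- sup = ⊤
    rw [eq_top_iff]
    intro x _
    rw [Submodule.mem_sup]
    refine ⟨((LinearMap.id : R →ₗ[k] R) + P) (c • x), ⟨c • x, rfl⟩,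
      ((LinearMap.id : R →ₗ[k] R) - P) (c • x), ⟨c • x, rfl⟩, ?_⟩
    simp only [LinearMap.add_apply, LinearMap.sub_apply, LinearMap.id_coe, id_eq]
    have e : (c • x + P (c • x)) + (c • x - P (c • x)) = c • x + c • x := by abel
    rw [e, ← smul_add, hhalf]
  · -- inf = ⊥
    rw [eq_bot_iff]
    rintro x ⟨h1, h2⟩
    have hx : x = -x := (fixP x h1).symm.trans (negP x h2)
    have hx0 : x + x = 0 := by nth_rewrite 2 [hx]; exact add_neg_cancel x
    have : x = 0 := by rw [← hhalf x, hx0, smul_zero]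
    simpa using this
end

section
/- Let k be a commutative ring, κ ∈ k, and let M be the free k-module with basis {u_n : n ≥ 0} (for instance M = ℕ →₀ k with u_n the standard basis vectors). Suppose ⋄ : M × M → M is a k-bilinear map satisfying the recursion: u_0 ⋄ u_n = u_n and u_n ⋄ u_0 = u_n for all n ≥ 0, and u_m ⋄ u_n = S(u_m ⋄ u_{n-1}) + S(u_{m-1} ⋄ u_n) + κ·(u_{m-1} ⋄ u_{n-1}) for all m, n ≥ 1, where S : M → M is the k-linear shift map S(u_n) = u_{n+1}. Then for all m, n ≥ 0: u_m ⋄ u_n = Σ_{r=0}^{min(m,n)} C(m+n−r, m)·C(m, r)·κ^r·u_{m+n−2r}, where C(a,b) denotes the binomial coefficient. -/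
/-- The basis vectors `u n = single n 1` of the free `k`-module `ℕ →₀ k`. -/
noncomputable def uvec {k : Type*} [CommRing k] (n : ℕ) : ℕ →₀ k := Finsupp.single n 1

private lemma key_choose (m n t : ℕ) (htm : t ≤ m) (htn : t ≤ n) :
    (m + n + 1 - t).choose (m + 1) * (m + 1).choose (t + 1)
      = (m + n - t).choose (m + 1) * (m + 1).choose (t + 1)
        + (m + n - t).choose m * m.choose (t + 1)
        + (m + n - t).choose m * m.choose t := by
  have h1 : m + n + 1 - t = (m + n - t) + 1 := by omega
  rw [h1, Nat.choose_succ_succ, Nat.choose_succ_succ m t]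
  ring

/-- If a `k`-bilinear product `⋄` on the free module with basis `{u_n}` satisfies
`u_0 ⋄ u_n = u_n = u_n ⋄ u_0` and the recursion
`u_m ⋄ u_n = S (u_m ⋄ u_{n-1}) + S (u_{m-1} ⋄ u_n) + κ • (u_{m-1} ⋄ u_{n-1})` for
`m, n ≥ 1` (with `S` the shift `u_n ↦ u_{n+1}`), then
`u_m ⋄ u_n = Σ_{r=0}^{min(m,n)} C(m+n-r, m) C(m, r) κ^r • u_{m+n-2r}`. -/
theorem stmt_8 {k : Type*} [CommRing k] (κ : k)
    (S : (ℕ →₀ k) →ₗ[k] (ℕ →₀ k))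
    (hS : ∀ n : ℕ, S (uvec n) = uvec (n + 1))
    (D : (ℕ →₀ k) →ₗ[k] (ℕ →₀ k) →ₗ[k] (ℕ →₀ k))
    (h0l : ∀ n : ℕ, D (uvec 0) (uvec n) = uvec n)
    (h0r : ∀ n : ℕ, D (uvec n) (uvec 0) = uvec n)
    (hrec : ∀ m n : ℕ,
      D (uvec (m + 1)) (uvec (n + 1)) =
        S (D (uvec (m + 1)) (uvec n)) + S (D (uvec m) (uvec (n + 1))) +
          κ • D (uvec m) (uvec n)) :
    ∀ m n : ℕ, D (uvec m) (uvec n) =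
      ∑ r ∈ Finset.range (min m n + 1),
        ((((m + n - r).choose m * m.choose r : ℕ) : k) * κ ^ r) •
          (uvec (m + n - 2 * r) : ℕ →₀ k) := by
  intro m
  induction m with
  | zero =>
    intro n
    simp [h0l]
  | succ m ihm =>
    intro n
    induction n with
    | zero =>
      simp [h0r]
    | succ n ihn =>
      rw [hrec, ihn, ihm (n + 1), ihm n, map_sum, map_sum]
      simp only [map_smul, hS]
      -- transform the first sum
      have e1 : ∑ r ∈ Finset.range (min (m + 1) n + 1),
            ((((m + 1 + n - r).choose (m + 1) * (m + 1).choose r : ℕ) : k) * κ ^ r) •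
              (uvec (m + 1 + n - 2 * r + 1) : ℕ →₀ k)
          = ∑ r ∈ Finset.range (min m n + 2),
            ((((m + 1 + n - r).choose (m + 1) * (m + 1).choose r : ℕ) : k) * κ ^ r) •
              (uvec (m + n + 2 - 2 * r) : ℕ →₀ k) := by
        rw [Finset.sum_congr rfl (fun r hr => ?_)]
        · apply Finset.sum_subset
          · intro r hr
            simp only [Finset.mem_range] at hr ⊢
            omega
          · intro r hr hnr
            simp only [Finset.mem_range] at hr hnr
            have : (m + 1 + n - r).choose (m + 1) = 0 := by
              apply Nat.choose_eq_zero_of_lt; omega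
            simp [this]
        · simp only [Finset.mem_range] at hr
          congr 2
          omega
      have e2 : ∑ r ∈ Finset.range (min m (n + 1) + 1),
            ((((m + (n + 1) - r).choose m * m.choose r : ℕ) : k) * κ ^ r) •
              (uvec (m + (n + 1) - 2 * r + 1) : ℕ →₀ k)
          = ∑ r ∈ Finset.range (min m n + 2),
            ((((m + (n + 1) - r).choose m * m.choose r : ℕ) : k) * κ ^ r) •
              (uvec (m + n + 2 - 2 * r) : ℕ →₀ k) := by
        rw [Finset.sum_congr rfl (fun r hr => ?_)]
        · apply Finset.sum_subset
          · intro r hr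
            simp only [Finset.mem_range] at hr ⊢
            omega
          · intro r hr hnr
            simp only [Finset.mem_range] at hr hnr
            have : m.choose r = 0 := by
              apply Nat.choose_eq_zero_of_lt; omega
            simp [this]
        · simp only [Finset.mem_range] at hr
          congr 2
          omega
      have e3 : κ • ∑ r ∈ Finset.range (min m n + 1),
            ((((m + n - r).choose m * m.choose r : ℕ) : k) * κ ^ r) •
              (uvec (m + n - 2 * r) : ℕ →₀ k)
          = ∑ t ∈ Finset.range (min m n + 1),
            ((((m + n - t).choose m * m.choose t : ℕ) : k) * κ ^ (t + 1)) •
              (uvec (m + n + 2 - 2 * (t + 1)) : ℕ →₀ k) := by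
        rw [Finset.smul_sum]
        refine Finset.sum_congr rfl (fun t ht => ?_)
        simp only [Finset.mem_range] at ht
        rw [smul_smul]
        congr 1
        · ring
        · congr 1
          omega
      rw [e1, e2, e3]
      have hmin : min (m + 1) (n + 1) + 1 = min m n + 2 := by omega
      rw [hmin]
      rw [Finset.sum_range_succ' _ (min m n + 1), Finset.sum_range_succ' _ (min m n + 1),
        Finset.sum_range_succ'
          (fun r => ((((m + 1 + (n + 1) - r).choose (m + 1) * (m + 1).choose r : ℕ) : k) * κ ^ r) •
            (uvec (m + 1 + (n + 1) - 2 * r) : ℕ →₀ k)) (min m n + 1)]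
      have hT0 : ((((m + 1 + (n + 1) - 0).choose (m + 1) * (m + 1).choose 0 : ℕ) : k) * κ ^ 0) •
            (uvec (m + 1 + (n + 1) - 2 * 0) : ℕ →₀ k)
          = ((((m + 1 + n - 0).choose (m + 1) * (m + 1).choose 0 : ℕ) : k) * κ ^ 0) •
              (uvec (m + n + 2 - 2 * 0) : ℕ →₀ k)
            + ((((m + (n + 1) - 0).choose m * m.choose 0 : ℕ) : k) * κ ^ 0) •
              (uvec (m + n + 2 - 2 * 0) : ℕ →₀ k) := by
        have e : m + 1 + (n + 1) - 0 = (m + n + 1) + 1 := by omega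
        have f1 : m + 1 + n - 0 = m + n + 1 := by omega
        have f2 : m + (n + 1) - 0 = m + n + 1 := by omega
        have hi : m + 1 + (n + 1) - 2 * 0 = m + n + 2 - 2 * 0 := by omega
        simp only [Nat.choose_zero_right, Nat.mul_one, pow_zero, mul_one, e, f1, f2, hi,
          Nat.choose_succ_succ]
        rw [← add_smul]
        push_cast
        ring_nf
      have hTt : ∀ t ∈ Finset.range (min m n + 1),
          ((((m + 1 + (n + 1) - (t + 1)).choose (m + 1) * (m + 1).choose (t + 1) : ℕ) : k) * κ ^ (t + 1)) •
            (uvec (m + 1 + (n + 1) - 2 * (t + 1)) : ℕ →₀ k)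
          = ((((m + 1 + n - (t + 1)).choose (m + 1) * (m + 1).choose (t + 1) : ℕ) : k) * κ ^ (t + 1)) •
              (uvec (m + n + 2 - 2 * (t + 1)) : ℕ →₀ k)
            + ((((m + (n + 1) - (t + 1)).choose m * m.choose (t + 1) : ℕ) : k) * κ ^ (t + 1)) •
              (uvec (m + n + 2 - 2 * (t + 1)) : ℕ →₀ k)
            + ((((m + n - t).choose m * m.choose t : ℕ) : k) * κ ^ (t + 1)) •
              (uvec (m + n + 2 - 2 * (t + 1)) : ℕ →₀ k) := by
        intro t ht
        simp only [Finset.mem_range] at ht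
        have htm : t ≤ m := by omega
        have htn : t ≤ n := by omega
        have h1 : m + 1 + (n + 1) - (t + 1) = m + n + 1 - t := by omega
        have h2 : m + 1 + n - (t + 1) = m + n - t := by omega
        have h3 : m + (n + 1) - (t + 1) = m + n - t := by omega
        have h4 : m + 1 + (n + 1) - 2 * (t + 1) = m + n + 2 - 2 * (t + 1) := by omega
        rw [h1, h2, h3, h4, key_choose m n t htm htn, ← add_smul, ← add_smul]
        push_cast
        ring_nf
      rw [Finset.sum_congr rfl hTt, hT0]
      simp only [Finset.sum_add_distrib]
      abel
end

section
/- Let k be a commutative ring, κ ∈ k, and let M be the free k-module with basis {u_n : n ≥ 0}. Let ⋄ : M × M → M be the k-bilinear map determined by u_m ⋄ u_n = Σ_{r=0}^{min(m,n)} C(m+n−r, m)·C(m, r)·κ^r·u_{m+n−2r}. Then ⋄ is associative: (x ⋄ y) ⋄ z = x ⋄ (y ⋄ z) for all x, y, z ∈ M. In particular, (M, ⋄) is a commutative unital k-algebra with unit u_0. -/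
/-!
On basis vectors both `(u_m ⋄ u_n) ⋄ u_p` and, by commutativity, `u_m ⋄ (u_n ⋄ u_p) =
(u_n ⋄ u_p) ⋄ u_m` expand as `∑ₜ a κᵗ u_{m+n+p-2t}` with natural-number coefficients
`a = diamondAssocCoeff m n p t`, resp. `diamondAssocCoeff n p m t`. So associativity over any `k`
reduces to the identity `diamondAssocCoeff m n p = diamondAssocCoeff n p m`, which is read off from
a model over `ℚ` with `κ = 1`: the polynomials `P₀ = 1`, `P₁ = X`,
`(j + 1) P_{j+1} = X P_j - j P_{j-1}` multiply by the rule `P_m P_n = ∑_r c(m,n,r) P_{m+n-2r}`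
(induction on `m`; the three-term recurrence becomes a recurrence for the multinomial coefficients
`c(m,n,r) = (m+n-r)! / (r! (m-r)! (n-r)!)`), and since `deg P_j = j`, the coefficients of
`(P_m P_n) P_p = (P_n P_p) P_m` in the basis `(P_j)` are unique.
-/

open Finset Polynomial
open scoped Nat

theorem sum_range_succ_eq_sum_shift_add {M : Type*} [AddCommMonoid M] (n : ℕ) (g : ℕ → M)
    (hg : g (n + 1) = 0) :
    ∑ r ∈ range (n + 1), g r = ∑ r ∈ range (n + 1), g (r + 1) + g 0 := by
  rw [← sum_range_succ', sum_range_succ _ (n + 1), hg, add_zero]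

theorem LinearIndependent.eq_of_sum_smul_sub_two_mul_eq {K V : Type*} [Ring K] [AddCommGroup V]
    [Module K V] {v : ℕ → V} (hv : LinearIndependent K v) {N : ℕ} {d e : ℕ → K}
    (hd : ∀ t, N < 2 * t → d t = 0) (he : ∀ t, N < 2 * t → e t = 0)
    (h : ∑ t ∈ range (N + 1), d t • v (N - 2 * t) = ∑ t ∈ range (N + 1), e t • v (N - 2 * t)) :
    d = e := by
  have hzero : ∑ t ∈ range (N / 2 + 1), (d t - e t) • v (N - 2 * t) = 0 := by
    rw [← eventually_constant_sum (fun t ht => by rw [hd t (by omega), he t (by omega), sub_self,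
      zero_smul]) (by omega : N / 2 + 1 ≤ N + 1)]
    simp only [sub_smul, sum_sub_distrib, h, sub_self]
  have hinj : Function.Injective (fun t : Fin (N / 2 + 1) => N - 2 * (t : ℕ)) := fun s t hst => by
    simp only at hst
    omega
  rw [← Fin.sum_univ_eq_sum_range (fun t => (d t - e t) • v (N - 2 * t))] at hzero
  funext t
  by_cases ht : 2 * t ≤ N
  · exact sub_eq_zero.1 (Fintype.linearIndependent_iff.1 (hv.comp _ hinj) _ hzero ⟨t, by omega⟩)
  · rw [hd t (by omega), he t (by omega)]

def diamondCoeff (m n r : ℕ) : ℕ := (m + n - r).choose m * m.choose r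

theorem diamondCoeff_eq_zero_iff {m n r : ℕ} : diamondCoeff m n r = 0 ↔ m < r ∨ n < r := by
  simp only [diamondCoeff, mul_eq_zero, Nat.choose_eq_zero_iff]
  omega

theorem diamondCoeff_eq_zero_of_lt_left {m n r : ℕ} (h : m < r) : diamondCoeff m n r = 0 :=
  diamondCoeff_eq_zero_iff.2 (Or.inl h)

theorem diamondCoeff_eq_zero_of_lt_right {m n r : ℕ} (h : n < r) : diamondCoeff m n r = 0 :=
  diamondCoeff_eq_zero_iff.2 (Or.inr h)

theorem diamondCoeff_mul_factorial {m n r a b : ℕ} (hm : m = r + a) (hn : n = r + b) :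
    diamondCoeff m n r * (r ! * a ! * b !) = (r + a + b)! := by
  subst hm hn
  have h₁ := Nat.choose_mul_factorial_mul_factorial (Nat.le_add_right (r + a) b)
  have h₂ := Nat.choose_mul_factorial_mul_factorial (Nat.le_add_right r a)
  rw [Nat.add_sub_cancel_left] at h₁ h₂
  rw [diamondCoeff, show r + a + (r + b) - r = r + a + b by omega]
  calc _ = (r + a + b).choose (r + a) * ((r + a).choose r * r ! * a !) * b ! := by ring
    _ = _ := by rw [h₂, h₁]

theorem diamondCoeff_comm (m n r : ℕ) : diamondCoeff m n r = diamondCoeff n m r := by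
  by_cases h : r ≤ m ∧ r ≤ n
  · obtain ⟨a, rfl⟩ := Nat.exists_eq_add_of_le h.1
    obtain ⟨b, rfl⟩ := Nat.exists_eq_add_of_le h.2
    refine Nat.eq_of_mul_eq_mul_right (by positivity : 0 < r ! * a ! * b !) ?_
    calc _ = (r + a + b)! := diamondCoeff_mul_factorial rfl rfl
      _ = (r + b + a)! := by rw [add_right_comm]
      _ = diamondCoeff (r + b) (r + a) r * (r ! * b ! * a !) :=
          (diamondCoeff_mul_factorial rfl rfl).symm
      _ = _ := by ring
  · rw [diamondCoeff_eq_zero_iff.2 (by omega), diamondCoeff_eq_zero_iff.2 (by omega)]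

theorem natCast_diamondCoeff_eq {m n r a b : ℕ} (hm : m = r + a) (hn : n = r + b) :
    (diamondCoeff m n r : ℚ) = (r + a + b)! / (r ! * a ! * b !) := by
  rw [eq_div_iff (by positivity)]
  exact_mod_cast diamondCoeff_mul_factorial hm hn

theorem diamondCoeff_self_left (m n : ℕ) : diamondCoeff m n m = n.choose m := by
  simp [diamondCoeff]

theorem diamondCoeff_self_right (m n : ℕ) : diamondCoeff m n n = m.choose n := by
  simp [diamondCoeff]

theorem diamondCoeff_recurrence_add (r a b : ℕ) :
    (r + a + 2) * diamondCoeff (r + a + 2) (r + b + 1) (r + 1) +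
        (r + a + 1) * diamondCoeff (r + a) (r + b + 1) r =
      (a + b + 1) * diamondCoeff (r + a + 1) (r + b + 1) (r + 1) +
        (a + b + 2) * diamondCoeff (r + a + 1) (r + b + 1) r := by
  suffices ((r + a + 2 : ℕ) : ℚ) * diamondCoeff (r + a + 2) (r + b + 1) (r + 1)
      + ((r + a + 1 : ℕ) : ℚ) * diamondCoeff (r + a) (r + b + 1) r =
        ((a + b + 1 : ℕ) : ℚ) * diamondCoeff (r + a + 1) (r + b + 1) (r + 1) +
          ((a + b + 2 : ℕ) : ℚ) * diamondCoeff (r + a + 1) (r + b + 1) r by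
    exact_mod_cast this
  rw [natCast_diamondCoeff_eq (a := a + 1) (b := b) (by omega) (by omega),
    natCast_diamondCoeff_eq (a := a) (b := b + 1) (by omega) (by omega),
    natCast_diamondCoeff_eq (a := a) (b := b) (by omega) (by omega),
    natCast_diamondCoeff_eq (a := a + 1) (b := b + 1) (by omega) (by omega),
    show r + 1 + (a + 1) + b = r + a + b + 1 + 1 by ring,
    show r + a + (b + 1) = r + a + b + 1 by ring, show r + 1 + a + b = r + a + b + 1 by ring,
    show r + (a + 1) + (b + 1) = r + a + b + 1 + 1 by ring]
  simp only [Nat.factorial_succ]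
  push_cast
  field_simp
  ring

theorem diamondCoeff_recurrence (m n r : ℕ) :
    (m + 2) * diamondCoeff (m + 2) n (r + 1) + (m + 1) * diamondCoeff m n r =
      (m + 1 + n - 2 * (r + 1) + 1) * diamondCoeff (m + 1) n (r + 1) +
        (m + 1 + n - 2 * r) * diamondCoeff (m + 1) n r := by
  rcases lt_trichotomy r n with hrn | rfl | hnr
  · rcases le_or_gt r m with hrm | hmr
    · obtain ⟨a, rfl⟩ := Nat.exists_eq_add_of_le hrm
      obtain ⟨b, rfl⟩ := Nat.exists_eq_add_of_lt hrn
      rw [show r + a + 1 + (r + b + 1) - 2 * (r + 1) + 1 = a + b + 1 by omega,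
        show r + a + 1 + (r + b + 1) - 2 * r = a + b + 2 by omega]
      exact diamondCoeff_recurrence_add r a b
    rw [diamondCoeff_eq_zero_of_lt_left hmr,
      diamondCoeff_eq_zero_of_lt_left (by omega : m + 1 < r + 1)]
    rcases Nat.lt_or_ge (m + 1) r with hmr' | hmr'
    · rw [diamondCoeff_eq_zero_of_lt_left (by omega : m + 2 < r + 1),
        diamondCoeff_eq_zero_of_lt_left hmr']
      simp
    obtain rfl : r = m + 1 := by omega
    rw [diamondCoeff_self_left, diamondCoeff_self_left,
      show m + 1 + n - 2 * (m + 1) = n - (m + 1) by omega]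
    linarith [Nat.choose_succ_right_eq n (m + 1)]
  · rw [diamondCoeff_eq_zero_of_lt_right (by omega : r < r + 1),
      diamondCoeff_eq_zero_of_lt_right (by omega : r < r + 1), diamondCoeff_self_right,
      diamondCoeff_self_right, show m + 1 + r - 2 * r = m + 1 - r by omega]
    linarith [Nat.choose_mul_succ_eq m r]
  · simp [diamondCoeff_eq_zero_of_lt_right hnr,
      diamondCoeff_eq_zero_of_lt_right (hnr.trans r.lt_succ_self)]

theorem diamondCoeff_recurrence_zero (m n : ℕ) :
    (m + 2) * diamondCoeff (m + 2) n 0 = (m + n + 2) * diamondCoeff (m + 1) n 0 := by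
  simp only [diamondCoeff, Nat.sub_zero, Nat.choose_zero_right, mul_one,
    show m + 2 + n = m + 1 + n + 1 by ring]
  linarith [Nat.add_one_mul_choose_eq (m + 1 + n) (m + 1)]

section DiamondProduct

variable {R A : Type*} [CommSemiring R] [AddCommMonoid A] [Module R A]

def IsDiamondProduct (κ : R) (b : ℕ → A) (μ : A →ₗ[R] A →ₗ[R] A) : Prop :=
  ∀ m n, μ (b m) (b n) = ∑ r ∈ range (min m n + 1),
    ((diamondCoeff m n r : R) * κ ^ r) • b (m + n - 2 * r)

theorem IsDiamondProduct.apply_eq_sum_range {κ : R} {b : ℕ → A} {μ : A →ₗ[R] A →ₗ[R] A}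
    (h : IsDiamondProduct κ b μ) {m n K : ℕ} (hK : min m n < K) :
    μ (b m) (b n) = ∑ r ∈ range K, ((diamondCoeff m n r : R) * κ ^ r) • b (m + n - 2 * r) := by
  refine (h m n).trans (eventually_constant_sum (fun r hr => ?_) hK).symm
  simp [diamondCoeff_eq_zero_iff.2 (by omega : m < r ∨ n < r)]

def diamondAssocCoeff (m n p t : ℕ) : ℕ :=
  ∑ r ∈ range (t + 1), diamondCoeff m n r * diamondCoeff (m + n - 2 * r) p (t - r)

theorem diamondAssocCoeff_eq_zero {m n p t : ℕ} (ht : m + n + p < 2 * t) :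
    diamondAssocCoeff m n p t = 0 := by
  refine sum_eq_zero fun r _ => ?_
  simp only [mul_eq_zero, diamondCoeff_eq_zero_iff]
  omega

theorem IsDiamondProduct.apply_apply_eq_sum {κ : R} {b : ℕ → A} {μ : A →ₗ[R] A →ₗ[R] A}
    (h : IsDiamondProduct κ b μ) (m n p : ℕ) :
    μ (μ (b m) (b n)) (b p) = ∑ t ∈ range (m + n + p + 1),
      ((diamondAssocCoeff m n p t : R) * κ ^ t) • b (m + n + p - 2 * t) := by
  set K := m + n + p + 1
  have hrow : ∀ r ∈ range K, ((diamondCoeff m n r : R) * κ ^ r) • μ (b (m + n - 2 * r)) (b p) =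
      ∑ s ∈ range (K - r), ((diamondCoeff m n r * diamondCoeff (m + n - 2 * r) p s : ℕ) *
        κ ^ (r + s) : R) • b (m + n + p - 2 * (r + s)) := by
    intro r _
    by_cases hr : r ≤ m ∧ r ≤ n
    · rw [h.apply_eq_sum_range (K := K - r) (by omega), smul_sum]
      refine sum_congr rfl fun s _ => ?_
      rw [smul_smul, show m + n - 2 * r + p - 2 * s = m + n + p - 2 * (r + s) by omega]
      push_cast
      congr 1
      ring
    · simp [diamondCoeff_eq_zero_iff.2 (by omega : m < r ∨ n < r)]
  rw [h.apply_eq_sum_range (show min m n < K by omega), map_sum, LinearMap.sum_apply]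
  simp only [map_smul, LinearMap.smul_apply]
  rw [sum_congr rfl hrow, ← sum_range_diag_flip]
  refine sum_congr rfl fun t _ => ?_
  rw [diamondAssocCoeff, Nat.cast_sum, sum_mul, sum_smul]
  refine sum_congr rfl fun r hr => ?_
  rw [Nat.add_sub_cancel' (Nat.lt_succ_iff.mp (mem_range.mp hr))]

end DiamondProduct

noncomputable def diamondPoly : ℕ → ℚ[X]
  | 0 => 1
  | 1 => X
  | n + 2 => C ((n + 2 : ℚ)⁻¹) * (X * diamondPoly (n + 1) - C ((n + 1 : ℚ)) * diamondPoly n)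

theorem X_mul_diamondPoly (j : ℕ) :
    X * diamondPoly j = ((j : ℚ) + 1) • diamondPoly (j + 1) + (j : ℚ) • diamondPoly (j - 1) := by
  cases j with
  | zero => simp [diamondPoly]
  | succ j =>
    rw [diamondPoly, smul_eq_C_mul, smul_eq_C_mul, ← mul_assoc, ← C_mul, Nat.add_sub_cancel]
    push_cast
    rw [add_assoc (j : ℚ), one_add_one_eq_two, mul_inv_cancel₀ (by positivity), C_1, one_mul,
      sub_add_cancel]

theorem degree_diamondPoly (n : ℕ) : (diamondPoly n).degree = n := by
  induction n using Nat.twoStepInduction with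
  | zero => simp [diamondPoly]
  | one => simp [diamondPoly]
  | more n _ ih =>
    have hlt : (C ((n + 1 : ℚ)) * diamondPoly n).degree < (X * diamondPoly (n + 1)).degree := by
      rw [X_mul, degree_mul_X, ih, degree_C_mul (by positivity), ‹(diamondPoly n).degree = n›]
      exact_mod_cast (by omega : n < n + 1 + 1)
    rw [diamondPoly, degree_C_mul (inv_ne_zero (by positivity)),
      degree_sub_eq_left_of_degree_lt hlt, X_mul, degree_mul_X, ih]
    push_cast
    ring

theorem linearIndependent_diamondPoly : LinearIndependent ℚ diamondPoly :=
  (Polynomial.Sequence.mk diamondPoly degree_diamondPoly).linearIndependent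

noncomputable def diamondPolyProd (m n : ℕ) : ℚ[X] :=
  ∑ r ∈ range (n + 1), (diamondCoeff m n r : ℚ) • diamondPoly (m + n - 2 * r)

theorem diamondPolyProd_add_two (m n : ℕ) :
    diamondPolyProd (m + 2) n =
      ∑ r ∈ range (n + 1), (diamondCoeff (m + 2) n (r + 1) : ℚ) • diamondPoly (m + n - 2 * r) +
        (diamondCoeff (m + 2) n 0 : ℚ) • diamondPoly (m + n + 2) := by
  rw [diamondPolyProd, sum_range_succ_eq_sum_shift_add n _
    (by simp [diamondCoeff_eq_zero_of_lt_right n.lt_succ_self])]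
  congr 1
  · exact sum_congr rfl fun r _ => by rw [show m + 2 + n - 2 * (r + 1) = m + n - 2 * r by omega]
  · rw [show m + 2 + n - 2 * 0 = m + n + 2 by omega]

theorem X_mul_diamondPolyProd_add_one (m n : ℕ) :
    X * diamondPolyProd (m + 1) n =
      ∑ r ∈ range (n + 1), ((((m + 1 + n - 2 * (r + 1) + 1) * diamondCoeff (m + 1) n (r + 1) +
          (m + 1 + n - 2 * r) * diamondCoeff (m + 1) n r : ℕ) : ℚ)) • diamondPoly (m + n - 2 * r) +
        (((m + n + 2) * diamondCoeff (m + 1) n 0 : ℕ) : ℚ) • diamondPoly (m + n + 2) := by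
  have hX (r : ℕ) : X * ((diamondCoeff (m + 1) n r : ℚ) • diamondPoly (m + 1 + n - 2 * r)) =
      (((m + 1 + n - 2 * r + 1) * diamondCoeff (m + 1) n r : ℕ) : ℚ) •
          diamondPoly (m + 1 + n - 2 * r + 1) +
        (((m + 1 + n - 2 * r) * diamondCoeff (m + 1) n r : ℕ) : ℚ) •
          diamondPoly (m + n - 2 * r) := by
    rw [mul_smul_comm, X_mul_diamondPoly, smul_add, smul_smul, smul_smul,
      show m + 1 + n - 2 * r - 1 = m + n - 2 * r by omega]
    push_cast
    module
  have hup (r : ℕ) : (((m + 1 + n - 2 * (r + 1) + 1) * diamondCoeff (m + 1) n (r + 1) : ℕ) : ℚ) •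
        diamondPoly (m + 1 + n - 2 * (r + 1) + 1) =
      (((m + 1 + n - 2 * (r + 1) + 1) * diamondCoeff (m + 1) n (r + 1) : ℕ) : ℚ) •
        diamondPoly (m + n - 2 * r) := by
    by_cases hr : r + 1 ≤ n ∧ r ≤ m
    · rw [show m + 1 + n - 2 * (r + 1) + 1 = m + n - 2 * r by omega]
    · simp [diamondCoeff_eq_zero_iff.2 (by omega : m + 1 < r + 1 ∨ n < r + 1)]
  rw [diamondPolyProd, mul_sum, sum_congr rfl fun r _ => hX r, sum_add_distrib,
    sum_range_succ_eq_sum_shift_add n _ (by simp [diamondCoeff_eq_zero_of_lt_right n.lt_succ_self]),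
    sum_congr rfl fun r _ => hup r, add_right_comm, ← sum_add_distrib]
  simp only [Nat.cast_add, add_smul, show m + 1 + n - 2 * 0 + 1 = m + n + 2 by omega]

theorem X_mul_diamondPolyProd (m n : ℕ) :
    X * diamondPolyProd (m + 1) n =
      ((m : ℚ) + 2) • diamondPolyProd (m + 2) n + ((m : ℚ) + 1) • diamondPolyProd m n := by
  rw [X_mul_diamondPolyProd_add_one, diamondPolyProd_add_two, diamondPolyProd]
  simp only [← diamondCoeff_recurrence, ← diamondCoeff_recurrence_zero, Nat.cast_add, Nat.cast_mul,
    add_smul, mul_smul, sum_add_distrib, smul_add, smul_sum]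
  push_cast
  abel

theorem diamondPoly_mul (m n : ℕ) : diamondPoly m * diamondPoly n = diamondPolyProd m n := by
  induction m using Nat.twoStepInduction with
  | zero =>
    rw [diamondPolyProd, sum_eq_single 0 (fun r _ hr => by
      rw [diamondCoeff_eq_zero_of_lt_left (Nat.pos_of_ne_zero hr), Nat.cast_zero, zero_smul])
      (by simp)]
    simp [diamondPoly, diamondCoeff]
  | one =>
    cases n with
    | zero => simp [diamondPolyProd, diamondPoly, diamondCoeff]
    | succ n =>
      rw [diamondPolyProd, eventually_constant_sum _ (by omega : 2 ≤ n + 1 + 1)]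
      · rw [show diamondPoly 1 = X from rfl, X_mul_diamondPoly]
        simp only [sum_range_succ, sum_range_zero, diamondCoeff]
        rw [show 1 + (n + 1) - 0 = n + 1 + 1 by omega, show 1 + (n + 1) - 1 = n + 1 by omega,
          show 1 + (n + 1) - 2 * 1 = n + 1 - 1 by omega]
        simp
      · intro r hr
        rw [diamondCoeff_eq_zero_of_lt_left (by omega), Nat.cast_zero, zero_smul]
  | more m ih₁ ih₂ =>
    have h := congrArg (· * diamondPoly n) (X_mul_diamondPoly (m + 1))
    simp only [add_mul, smul_mul_assoc, mul_assoc, ih₁, ih₂, X_mul_diamondPolyProd,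
      Nat.add_sub_cancel] at h
    push_cast at h
    rw [show (m : ℚ) + 1 + 1 = m + 2 by ring, add_left_inj] at h
    exact (smul_right_injective _ (by positivity : (m : ℚ) + 2 ≠ 0) h).symm

theorem isDiamondProduct_diamondPoly :
    IsDiamondProduct (1 : ℚ) diamondPoly (LinearMap.mul ℚ ℚ[X]) := by
  intro m n
  simp only [LinearMap.mul_apply', diamondPoly_mul, diamondPolyProd, one_pow, mul_one]
  refine eventually_constant_sum (fun r hr => ?_) (by omega)
  rw [diamondCoeff_eq_zero_iff.2 (by omega), Nat.cast_zero, zero_smul]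

theorem diamondAssocCoeff_rotate (m n p : ℕ) :
    diamondAssocCoeff m n p = diamondAssocCoeff n p m := by
  have hl := isDiamondProduct_diamondPoly.apply_apply_eq_sum m n p
  have hr := isDiamondProduct_diamondPoly.apply_apply_eq_sum n p m
  simp only [LinearMap.mul_apply', one_pow, mul_one, show n + p + m = m + n + p by ring] at hl hr
  funext t
  have := linearIndependent_diamondPoly.eq_of_sum_smul_sub_two_mul_eq
    (d := fun t => (diamondAssocCoeff m n p t : ℚ)) (e := fun t => (diamondAssocCoeff n p m t : ℚ))
    (fun t ht => by rw [diamondAssocCoeff_eq_zero ht, Nat.cast_zero])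
    (fun t ht => by rw [diamondAssocCoeff_eq_zero (by omega : n + p + m < 2 * t), Nat.cast_zero])
    (by rw [← hl, ← hr]; ring)
  exact_mod_cast congrFun this t

section Basis

variable {R A : Type*} [CommSemiring R] [AddCommMonoid A] [Module R A] {κ : R}
  {b : Module.Basis ℕ R A} {μ : A →ₗ[R] A →ₗ[R] A}

theorem IsDiamondProduct.comm (h : IsDiamondProduct κ b μ) (x y : A) : μ x y = μ y x := by
  refine LinearMap.congr_fun₂ (LinearMap.ext_basis b b (B' := μ.flip) fun m n => ?_) x y
  rw [LinearMap.flip_apply, h m n, h n m, min_comm, add_comm n m]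
  exact sum_congr rfl fun r _ => by rw [diamondCoeff_comm]

theorem IsDiamondProduct.basis_zero_mul (h : IsDiamondProduct κ b μ) (x : A) : μ (b 0) x = x := by
  refine LinearMap.congr_fun (b.ext (f₂ := LinearMap.id) fun n => ?_) x
  simp [h 0 n, diamondCoeff]

theorem IsDiamondProduct.assoc (h : IsDiamondProduct κ b μ) (x y z : A) :
    μ (μ x y) z = μ x (μ y z) := by
  have hbasis (m n p : ℕ) : μ (μ (b m) (b n)) (b p) = μ (b m) (μ (b n) (b p)) := by
    rw [h.comm (b m) (μ (b n) (b p)), h.apply_apply_eq_sum, h.apply_apply_eq_sum,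
      diamondAssocCoeff_rotate, show n + p + m = m + n + p by ring]
  have hleft (m : ℕ) (y z : A) : μ (μ (b m) y) z = μ (b m) (μ y z) :=
    LinearMap.congr_fun₂ (LinearMap.ext_basis b b (B := μ ∘ₗ μ (b m))
      (B' := LinearMap.llcomp R A A A (μ (b m)) ∘ₗ μ) (hbasis m)) y z
  exact LinearMap.congr_fun (b.ext (f₁ := μ.flip z ∘ₗ μ.flip y) (f₂ := μ.flip (μ y z))
    fun m => hleft m y z) x

end Basis

/-- The modified quasi-shuffle product of weight `κ`, determined on basis elements by
`u_m ⋄ u_n = Σ_{r=0}^{min(m,n)} C(m+n-r, m) C(m, r) κ^r • u_{m+n-2r}`, is associative;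
in particular it makes the free module a commutative unital `k`-algebra with unit `u_0`. -/
theorem stmt_10 {k : Type*} [CommRing k] (κ : k)
    (D : (ℕ →₀ k) →ₗ[k] (ℕ →₀ k) →ₗ[k] (ℕ →₀ k))
    (hD : ∀ m n : ℕ, D (uvec m) (uvec n) =
      ∑ r ∈ Finset.range (min m n + 1),
        ((((m + n - r).choose m * m.choose r : ℕ) : k) * κ ^ r) •
          (uvec (m + n - 2 * r) : ℕ →₀ k)) :
    (∀ x y z : ℕ →₀ k, D (D x y) z = D x (D y z)) ∧
    (∀ x : ℕ →₀ k, D (uvec 0) x = x) ∧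
    (∀ x : ℕ →₀ k, D x (uvec 0) = x) ∧
    (∀ x y : ℕ →₀ k, D x y = D y x) := by
  have h : IsDiamondProduct κ Finsupp.basisSingleOne D := hD
  exact ⟨h.assoc, h.basis_zero_mul, fun x => (h.comm x _).trans (h.basis_zero_mul x), h.comm⟩
end

section
/- Let k be a commutative ring, κ ∈ k, and let M be the free k-module with basis {u_n : n ≥ 0} equipped with the k-bilinear product ⋄ determined by u_m ⋄ u_n = Σ_{r=0}^{min(m,n)} C(m+n−r, m)·C(m, r)·κ^r·u_{m+n−2r}. Let P : M → M be the k-linear shift map P(u_n) = u_{n+1}. Then P is a modified Rota-Baxter operator of weight κ on (M, ⋄): P(x) ⋄ P(y) = P(x ⋄ P(y)) + P(P(x) ⋄ y) + κ·(x ⋄ y) for all x, y ∈ M. -/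
open Finset

def quasiShuffleCoeff (m n r : ℕ) : ℕ := (m + n - r).choose m * m.choose r

theorem quasiShuffleCoeff_eq_zero_of_min_lt {m n r : ℕ} (h : min m n < r) :
    quasiShuffleCoeff m n r = 0 := by
  rcases lt_or_ge m r with hm | hm
  · simp [quasiShuffleCoeff, Nat.choose_eq_zero_of_lt hm]
  · have : m + n - r < m := by omega
    simp [quasiShuffleCoeff, Nat.choose_eq_zero_of_lt this]

theorem quasiShuffleCoeff_succ_succ_zero (m n : ℕ) :
    quasiShuffleCoeff (m + 1) (n + 1) 0 =
      quasiShuffleCoeff m (n + 1) 0 + quasiShuffleCoeff (m + 1) n 0 := by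
  simp only [quasiShuffleCoeff, Nat.sub_zero, Nat.choose_zero_right, mul_one]
  rw [show m + 1 + (n + 1) = m + n + 1 + 1 by omega, Nat.choose_succ_succ,
    show m + (n + 1) = m + n + 1 by omega, show m + 1 + n = m + n + 1 by omega]

theorem quasiShuffleCoeff_succ_succ_succ (m n r : ℕ) :
    quasiShuffleCoeff (m + 1) (n + 1) (r + 1) =
      quasiShuffleCoeff m (n + 1) (r + 1) + quasiShuffleCoeff (m + 1) n (r + 1) +
        quasiShuffleCoeff m n r := by
  rcases le_or_gt r (min m n) with h | h
  · simp only [quasiShuffleCoeff]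
    rw [show m + 1 + (n + 1) - (r + 1) = m + n - r + 1 by omega,
      show m + (n + 1) - (r + 1) = m + n - r by omega,
      show m + 1 + n - (r + 1) = m + n - r by omega,
      Nat.choose_succ_succ (m + n - r), Nat.choose_succ_succ m r]
    ring
  · simp only [quasiShuffleCoeff_eq_zero_of_min_lt h,
      quasiShuffleCoeff_eq_zero_of_min_lt (show min (m + 1) (n + 1) < r + 1 by omega),
      quasiShuffleCoeff_eq_zero_of_min_lt (show min m (n + 1) < r + 1 by omega),
      quasiShuffleCoeff_eq_zero_of_min_lt (show min (m + 1) n < r + 1 by omega)]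

theorem sum_range_quasiShuffleCoeff_smul_of_min_lt {k M : Type*} [CommRing k] [AddCommMonoid M]
    [Module k M] (κ : k) (v : ℕ → M) {m n K : ℕ} (hK : min m n < K) :
    ∑ r ∈ range (min m n + 1), ((quasiShuffleCoeff m n r : k) * κ ^ r) • v r =
      ∑ r ∈ range K, ((quasiShuffleCoeff m n r : k) * κ ^ r) • v r := by
  refine sum_subset (range_subset_range.2 hK) fun r _ hr => ?_
  rw [quasiShuffleCoeff_eq_zero_of_min_lt (by simp only [mem_range, not_lt] at hr; omega)]
  simp

theorem map_sum_range_quasiShuffleCoeff_smul_uvec {k : Type*} [CommRing k] (κ : k)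
    {P : (ℕ →₀ k) →ₗ[k] (ℕ →₀ k)} (hP : ∀ n : ℕ, P (uvec n) = uvec (n + 1)) (m n : ℕ) :
    P (∑ r ∈ range (min m n + 1),
        ((quasiShuffleCoeff m n r : k) * κ ^ r) • uvec (m + n - 2 * r)) =
      ∑ r ∈ range (min m n + 1),
        ((quasiShuffleCoeff m n r : k) * κ ^ r) • uvec (m + n + 1 - 2 * r) := by
  rw [map_sum]
  refine sum_congr rfl fun r hr => ?_
  have : r ≤ min m n := Nat.lt_succ_iff.1 (mem_range.1 hr)
  rw [map_smul, hP, show m + n - 2 * r + 1 = m + n + 1 - 2 * r by omega]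

theorem quasiShuffle_shift_shift_uvec {k : Type*} [CommRing k] (κ : k)
    {D : (ℕ →₀ k) →ₗ[k] (ℕ →₀ k) →ₗ[k] (ℕ →₀ k)}
    (hD : ∀ m n : ℕ, D (uvec m) (uvec n) = ∑ r ∈ range (min m n + 1),
      ((quasiShuffleCoeff m n r : k) * κ ^ r) • uvec (m + n - 2 * r))
    {P : (ℕ →₀ k) →ₗ[k] (ℕ →₀ k)} (hP : ∀ n : ℕ, P (uvec n) = uvec (n + 1)) (m n : ℕ) :
    D (P (uvec m)) (P (uvec n)) = P (D (uvec m) (P (uvec n))) + P (D (P (uvec m)) (uvec n)) +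
      κ • D (uvec m) (uvec n) := by
  simp only [hP, hD, map_sum_range_quasiShuffleCoeff_smul_uvec κ hP]
  rw [show m + 1 + (n + 1) = m + n + 2 by omega, show m + (n + 1) + 1 = m + n + 2 by omega,
    show m + 1 + n + 1 = m + n + 2 by omega, Nat.add_min_add_right,
    sum_range_quasiShuffleCoeff_smul_of_min_lt κ (fun r => uvec (m + n + 2 - 2 * r))
      (show min m (n + 1) < min m n + 1 + 1 by omega),
    sum_range_quasiShuffleCoeff_smul_of_min_lt κ (fun r => uvec (m + n + 2 - 2 * r))
      (show min (m + 1) n < min m n + 1 + 1 by omega)]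
  simp only [sum_range_succ' _ (min m n + 1), smul_sum]
  have hsucc (r : ℕ) : ((quasiShuffleCoeff (m + 1) (n + 1) (r + 1) : k) * κ ^ (r + 1)) •
        (uvec (m + n + 2 - 2 * (r + 1)) : ℕ →₀ k) =
      ((quasiShuffleCoeff m (n + 1) (r + 1) : k) * κ ^ (r + 1)) • uvec (m + n + 2 - 2 * (r + 1)) +
      ((quasiShuffleCoeff (m + 1) n (r + 1) : k) * κ ^ (r + 1)) • uvec (m + n + 2 - 2 * (r + 1)) +
      κ • (((quasiShuffleCoeff m n r : k) * κ ^ r) • uvec (m + n - 2 * r)) := by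
    rw [quasiShuffleCoeff_succ_succ_succ, show m + n + 2 - 2 * (r + 1) = m + n - 2 * r by omega]
    push_cast
    module
  simp only [hsucc, quasiShuffleCoeff_succ_succ_zero, sum_add_distrib]
  push_cast
  module

/-- The shift map `P(u_n) = u_{n+1}` is a modified Rota-Baxter operator of weight `κ` on
the free module with basis `{u_n}` equipped with the modified quasi-shuffle product `⋄`
determined by `u_m ⋄ u_n = Σ_{r=0}^{min(m,n)} C(m+n-r, m) C(m, r) κ^r • u_{m+n-2r}`. -/
theorem stmt_11 {k : Type*} [CommRing k] (κ : k)
    (D : (ℕ →₀ k) →ₗ[k] (ℕ →₀ k) →ₗ[k] (ℕ →₀ k))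
    (hD : ∀ m n : ℕ, D (uvec m) (uvec n) =
      ∑ r ∈ Finset.range (min m n + 1),
        ((((m + n - r).choose m * m.choose r : ℕ) : k) * κ ^ r) •
          (uvec (m + n - 2 * r) : ℕ →₀ k))
    (P : (ℕ →₀ k) →ₗ[k] (ℕ →₀ k))
    (hP : ∀ n : ℕ, P (uvec n) = uvec (n + 1)) :
    ∀ x y : ℕ →₀ k, D (P x) (P y) = P (D x (P y)) + P (D (P x) y) + κ • D x y := by
  have hbilinear : D.compl₁₂ P P = (D.compl₂ P).compr₂ P + (D ∘ₗ P).compr₂ P + κ • D :=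
    LinearMap.ext_basis Finsupp.basisSingleOne Finsupp.basisSingleOne fun i j =>
      quasiShuffle_shift_shift_uvec κ hD hP i j
  exact fun x y => LinearMap.congr_fun₂ hbilinear x y
end

section
/- Let k be a commutative ring, κ ∈ k, R and S unital associative k-algebras, and P : S → S a modified Rota-Baxter operator of weight κ. Then id_R ⊗ P is a modified Rota-Baxter operator of weight κ on the tensor product k-algebra R ⊗ S: (id⊗P)(α)·(id⊗P)(β) = (id⊗P)(α·(id⊗P)(β)) + (id⊗P)((id⊗P)(α)·β) + κ·αβ for all α, β ∈ R ⊗ S. -/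
open TensorProduct

/-- If `P : S → S` is a modified Rota-Baxter operator of weight `κ`, then `id ⊗ P` is a
modified Rota-Baxter operator of weight `κ` on the tensor product algebra `R ⊗ S`. -/
theorem stmt_13 {k R S : Type*} [CommRing k] [Ring R] [Ring S] [Algebra k R] [Algebra k S]
    (κ : k) (P : S →ₗ[k] S)
    (hP : ∀ u v : S, P u * P v = P (u * P v) + P (P u * v) + κ • (u * v)) :
    ∀ α β : R ⊗[k] S,
      (LinearMap.lTensor R P) α * (LinearMap.lTensor R P) β =
        (LinearMap.lTensor R P) (α * (LinearMap.lTensor R P) β) +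
          (LinearMap.lTensor R P) ((LinearMap.lTensor R P) α * β) + κ • (α * β) := by
  intro α β
  induction α using TensorProduct.induction_on with
  | zero => simp
  | tmul a u =>
    induction β using TensorProduct.induction_on with
    | zero => simp
    | tmul b v =>
      simp only [LinearMap.lTensor_tmul, Algebra.TensorProduct.tmul_mul_tmul,
        TensorProduct.smul_tmul', TensorProduct.tmul_smul]
      rw [hP u v]
      simp [TensorProduct.tmul_add, TensorProduct.smul_tmul']
    | add x y hx hy =>
      simp only [map_add, mul_add, hx, hy, smul_add]
      abel
  | add x y hx hy =>
    simp only [map_add, add_mul, hx, hy, smul_add]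
    abel
end

section
/- Let k be a commutative ring, λ ∈ k, and let M be the free k-module with basis {u_n : n ≥ 0}. Define the k-linear maps Δ : M → M ⊗ M by Δ(u_0) = u_0 ⊗ u_0 and Δ(u_n) = Σ_{r=0}^{n} u_r ⊗ u_{n−r} + λ·Σ_{r=0}^{n−1} u_r ⊗ u_{n−1−r} for n ≥ 1, and ε : M → k by ε(u_n) = (−λ)^n. Then ε satisfies the counit property for Δ: for all n ≥ 0, (ε ⊗ id)(Δ(u_n)) = 1 ⊗ u_n and (id ⊗ ε)(Δ(u_n)) = u_n ⊗ 1 (i.e., applying ε to one tensor factor of Δ(u_n) and multiplying recovers u_n). -/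
open TensorProduct

lemma key_left {k : Type*} [CommRing k] (lam : k) (n : ℕ) :
    (∑ r ∈ Finset.range (n + 2), (-lam) ^ r • (uvec (n + 1 - r) : ℕ →₀ k)) +
      lam • ∑ r ∈ Finset.range (n + 1), (-lam) ^ r • (uvec (n - r) : ℕ →₀ k) =
    (uvec (n + 1) : ℕ →₀ k) := by
  rw [Finset.sum_range_succ', Finset.smul_sum]
  simp only [pow_zero, one_smul, Nat.sub_zero, Nat.add_sub_add_right]
  rw [add_right_comm, ← Finset.sum_add_distrib]
  have : ∀ r ∈ Finset.range (n + 1),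
      ((-lam) ^ (r + 1) • (uvec (n - r) : ℕ →₀ k) + lam • (-lam) ^ r • uvec (n - r)) = 0 := by
    intro r _
    rw [smul_smul, pow_succ, ← add_smul]
    ring_nf
    simp
  rw [Finset.sum_congr rfl this]
  simp

lemma key_right {k : Type*} [CommRing k] (lam : k) (n : ℕ) :
    (∑ r ∈ Finset.range (n + 2), (-lam) ^ (n + 1 - r) • (uvec r : ℕ →₀ k)) +
      lam • ∑ r ∈ Finset.range (n + 1), (-lam) ^ (n - r) • (uvec r : ℕ →₀ k) =
    (uvec (n + 1) : ℕ →₀ k) := by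
  rw [Finset.sum_range_succ, Finset.smul_sum]
  simp only [Nat.sub_self, pow_zero, one_smul]
  rw [add_right_comm, ← Finset.sum_add_distrib]
  have : ∀ r ∈ Finset.range (n + 1),
      ((-lam) ^ (n + 1 - r) • (uvec r : ℕ →₀ k) + lam • (-lam) ^ (n - r) • uvec r) = 0 := by
    intro r hr
    have hr' : r ≤ n := Nat.lt_succ_iff.mp (Finset.mem_range.mp hr)
    have : n + 1 - r = (n - r) + 1 := by omega
    rw [this, smul_smul, pow_succ, ← add_smul]
    ring_nf
    simp
  rw [Finset.sum_congr rfl this]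
  simp

lemma tmul_left_eq {k : Type*} [CommRing k] (a : k) (v : ℕ →₀ k) :
    a ⊗ₜ[k] v = (1 : k) ⊗ₜ[k] (a • v) := by
  rw [← smul_tmul, smul_eq_mul, mul_one]

lemma tmul_right_eq {k : Type*} [CommRing k] (a : k) (v : ℕ →₀ k) :
    v ⊗ₜ[k] a = (a • v) ⊗ₜ[k] (1 : k) := by
  rw [smul_tmul, smul_eq_mul, mul_one]

/-- For the coproduct `Δ(u_0) = u_0 ⊗ u_0`,
`Δ(u_n) = Σ_{r=0}^{n} u_r ⊗ u_{n-r} + λ • Σ_{r=0}^{n-1} u_r ⊗ u_{n-1-r}` (`n ≥ 1`) and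
the map `ε(u_n) = (-λ)^n`, `ε` satisfies the counit property:
`(ε ⊗ id)(Δ(u_n)) = 1 ⊗ u_n` and `(id ⊗ ε)(Δ(u_n)) = u_n ⊗ 1` for all `n`. -/
theorem stmt_15 {k : Type*} [CommRing k] (lam : k)
    (Δ : (ℕ →₀ k) →ₗ[k] (ℕ →₀ k) ⊗[k] (ℕ →₀ k))
    (h0 : Δ (uvec 0) = uvec 0 ⊗ₜ[k] uvec 0)
    (hΔ : ∀ n : ℕ, Δ (uvec (n + 1)) =
      (∑ r ∈ Finset.range (n + 2), uvec r ⊗ₜ[k] (uvec (n + 1 - r) : ℕ →₀ k)) +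
        lam • ∑ r ∈ Finset.range (n + 1), uvec r ⊗ₜ[k] (uvec (n - r) : ℕ →₀ k))
    (ε : (ℕ →₀ k) →ₗ[k] k)
    (hε : ∀ n : ℕ, ε (uvec n) = (-lam) ^ n) :
    ∀ n : ℕ,
      (TensorProduct.map ε (LinearMap.id : (ℕ →₀ k) →ₗ[k] (ℕ →₀ k))) (Δ (uvec n)) =
          (1 : k) ⊗ₜ[k] (uvec n : ℕ →₀ k) ∧
      (TensorProduct.map (LinearMap.id : (ℕ →₀ k) →ₗ[k] (ℕ →₀ k)) ε) (Δ (uvec n)) =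
          (uvec n : ℕ →₀ k) ⊗ₜ[k] (1 : k) := by
  intro n
  cases n with
  | zero =>
    constructor <;>
      simp [h0, hε, TensorProduct.map_tmul]
  | succ n =>
    constructor
    · rw [hΔ, map_add, map_smul, map_sum, map_sum]
      simp only [TensorProduct.map_tmul, LinearMap.id_apply, hε]
      have e1 : (∑ r ∈ Finset.range (n + 2), ((-lam) ^ r) ⊗ₜ[k] (uvec (n + 1 - r) : ℕ →₀ k)) =
          (1 : k) ⊗ₜ[k] ∑ r ∈ Finset.range (n + 2), (-lam) ^ r • (uvec (n + 1 - r) : ℕ →₀ k) := by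
        rw [TensorProduct.tmul_sum]
        exact Finset.sum_congr rfl fun r _ => tmul_left_eq _ _
      have e2 : (∑ r ∈ Finset.range (n + 1), ((-lam) ^ r) ⊗ₜ[k] (uvec (n - r) : ℕ →₀ k)) =
          (1 : k) ⊗ₜ[k] ∑ r ∈ Finset.range (n + 1), (-lam) ^ r • (uvec (n - r) : ℕ →₀ k) := by
        rw [TensorProduct.tmul_sum]
        exact Finset.sum_congr rfl fun r _ => tmul_left_eq _ _
      rw [e1, e2, ← TensorProduct.tmul_smul, ← TensorProduct.tmul_add, key_left]
    · rw [hΔ, map_add, map_smul, map_sum, map_sum]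
      simp only [TensorProduct.map_tmul, LinearMap.id_apply, hε]
      have e1 : (∑ r ∈ Finset.range (n + 2), (uvec r : ℕ →₀ k) ⊗ₜ[k] ((-lam) ^ (n + 1 - r))) =
          (∑ r ∈ Finset.range (n + 2), (-lam) ^ (n + 1 - r) • (uvec r : ℕ →₀ k)) ⊗ₜ[k] (1 : k) := by
        rw [TensorProduct.sum_tmul]
        exact Finset.sum_congr rfl fun r _ => tmul_right_eq _ _
      have e2 : (∑ r ∈ Finset.range (n + 1), (uvec r : ℕ →₀ k) ⊗ₜ[k] ((-lam) ^ (n - r))) =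
          (∑ r ∈ Finset.range (n + 1), (-lam) ^ (n - r) • (uvec r : ℕ →₀ k)) ⊗ₜ[k] (1 : k) := by
        rw [TensorProduct.sum_tmul]
        exact Finset.sum_congr rfl fun r _ => tmul_right_eq _ _
      rw [e1, e2, TensorProduct.smul_tmul', ← TensorProduct.add_tmul, key_right]
end

section
/- Let k be a commutative ring, λ ∈ k, and let M be the free k-module with basis {u_n : n ≥ 0}. Let Δ : M → M ⊗ M be the k-linear map with Δ(u_0) = u_0 ⊗ u_0 and Δ(u_n) = Σ_{r=0}^{n} u_r ⊗ u_{n−r} + λ·Σ_{r=0}^{n−1} u_r ⊗ u_{n−1−r} for n ≥ 1. Then Δ is coassociative: (Δ ⊗ id) ∘ Δ = (id ⊗ Δ) ∘ Δ as maps M → M ⊗ M ⊗ M. -/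
/-!
Write `T` for the divided power coproduct `u n ↦ ∑_{i + j = n} u i ⊗ u j` and `d` for the shift
`u (n + 1) ↦ u n`, `u 0 ↦ 0`. Then `Δ = T + λ • T ∘ d`. The coproduct `T` is coassociative, and `d`
commutes with it on either tensor factor: `T ∘ d = (d ⊗ id) ∘ T = (id ⊗ d) ∘ T`. Expanding, both
`(Δ ⊗ id) ∘ Δ` and `(id ⊗ Δ) ∘ Δ` become `(T ⊗ id) ∘ T ∘ (1 + λ d)²`.
-/

open TensorProduct

theorem Finset.sum_antidiagonal_assoc {A M : Type*} [AddCommMonoid A] [HasAntidiagonal A]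
    [AddCommMonoid M] (f : A → A → A → M) (n : A) :
    ∑ p ∈ antidiagonal n, ∑ q ∈ antidiagonal p.1, f q.1 q.2 p.2 =
      ∑ p ∈ antidiagonal n, ∑ q ∈ antidiagonal p.2, f p.1 q.1 q.2 := by
  simp only [Finset.sum_sigma']
  apply Finset.sum_nbij' (fun ⟨⟨_, j⟩, ⟨k, l⟩⟩ ↦ ⟨(k, l + j), (l, j)⟩)
    (fun ⟨⟨i, _⟩, ⟨k, l⟩⟩ ↦ ⟨(i + k, l), (i, k)⟩) <;> aesop (add simp [add_assoc])

theorem coassoc_add_smul_comp {R M : Type*} [CommSemiring R] [AddCommMonoid M] [Module R M]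
    {δ : M →ₗ[R] M ⊗[R] M} {d : M →ₗ[R] M} (c : R)
    (hδ : (TensorProduct.assoc R M M M).toLinearMap ∘ₗ δ.rTensor M ∘ₗ δ = δ.lTensor M ∘ₗ δ)
    (hr : d.rTensor M ∘ₗ δ = δ ∘ₗ d) (hl : d.lTensor M ∘ₗ δ = δ ∘ₗ d) :
    (TensorProduct.assoc R M M M).toLinearMap ∘ₗ (δ + c • δ ∘ₗ d).rTensor M ∘ₗ
        (δ + c • δ ∘ₗ d) =
      (δ + c • δ ∘ₗ d).lTensor M ∘ₗ (δ + c • δ ∘ₗ d) := by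
  simp only [LinearMap.ext_iff, LinearMap.comp_apply, LinearEquiv.coe_coe] at hδ hr hl
  ext x
  simp only [LinearMap.rTensor_add, LinearMap.rTensor_smul, LinearMap.rTensor_comp,
    LinearMap.lTensor_add, LinearMap.lTensor_smul, LinearMap.lTensor_comp, LinearMap.coe_comp,
    Function.comp_apply, LinearMap.add_apply, LinearMap.smul_apply, map_add, map_smul,
    LinearEquiv.coe_coe, hr, hl, hδ]

section DividedPower

open Finset

variable (R : Type*) [CommSemiring R]

noncomputable def dividedPowerComul : (ℕ →₀ R) →ₗ[R] (ℕ →₀ R) ⊗[R] (ℕ →₀ R) :=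
  Finsupp.linearCombination R fun n ↦
    ∑ p ∈ antidiagonal n, Finsupp.single p.1 1 ⊗ₜ[R] Finsupp.single p.2 1

noncomputable def shiftDown : (ℕ →₀ R) →ₗ[R] ℕ →₀ R :=
  Finsupp.lcomapDomain (· + 1) (add_left_injective 1)

variable {R}

theorem dividedPowerComul_single_one (n : ℕ) :
    dividedPowerComul R (Finsupp.single n 1) =
      ∑ p ∈ antidiagonal n, Finsupp.single p.1 1 ⊗ₜ[R] Finsupp.single p.2 1 := by
  simp [dividedPowerComul]

theorem shiftDown_single_zero (r : R) : shiftDown R (Finsupp.single 0 r) = 0 :=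
  Finsupp.comapDomain_single_of_not_mem_range (by simp) r _

theorem shiftDown_single_succ (n : ℕ) (r : R) :
    shiftDown R (Finsupp.single (n + 1) r) = Finsupp.single n r :=
  Finsupp.comapDomain_single (· + 1) n r _

theorem dividedPowerComul_coassoc :
    (TensorProduct.assoc R _ _ _).toLinearMap ∘ₗ (dividedPowerComul R).rTensor (ℕ →₀ R) ∘ₗ
        dividedPowerComul R =
      (dividedPowerComul R).lTensor (ℕ →₀ R) ∘ₗ dividedPowerComul R := by
  ext n : 2
  simp only [LinearMap.coe_comp, Function.comp_apply, Finsupp.lsingle_apply,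
    dividedPowerComul_single_one, map_sum, LinearMap.rTensor_tmul, LinearMap.lTensor_tmul,
    sum_tmul, tmul_sum, LinearEquiv.coe_coe, TensorProduct.assoc_tmul]
  exact sum_antidiagonal_assoc (fun a b c ↦ Finsupp.single a 1 ⊗ₜ[R] (Finsupp.single b 1 ⊗ₜ[R]
    (Finsupp.single c 1 : ℕ →₀ R))) n

theorem rTensor_shiftDown_comp_dividedPowerComul :
    (shiftDown R).rTensor (ℕ →₀ R) ∘ₗ dividedPowerComul R = dividedPowerComul R ∘ₗ shiftDown R := by
  ext n : 2
  cases n with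
  | zero => simp [dividedPowerComul_single_one, shiftDown_single_zero]
  | succ n =>
    simp [dividedPowerComul_single_one, shiftDown_single_zero, shiftDown_single_succ,
      Nat.sum_antidiagonal_succ]

theorem lTensor_shiftDown_comp_dividedPowerComul :
    (shiftDown R).lTensor (ℕ →₀ R) ∘ₗ dividedPowerComul R = dividedPowerComul R ∘ₗ shiftDown R := by
  ext n : 2
  cases n with
  | zero => simp [dividedPowerComul_single_one, shiftDown_single_zero]
  | succ n =>
    simp [dividedPowerComul_single_one, shiftDown_single_zero, shiftDown_single_succ,
      Nat.sum_antidiagonal_succ']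

end DividedPower

/-- The coproduct `Δ(u_0) = u_0 ⊗ u_0`,
`Δ(u_n) = Σ_{r=0}^{n} u_r ⊗ u_{n-r} + λ • Σ_{r=0}^{n-1} u_r ⊗ u_{n-1-r}` (`n ≥ 1`) is
coassociative: `(Δ ⊗ id) ∘ Δ = (id ⊗ Δ) ∘ Δ` (up to the associator of threefold tensor
products). -/
theorem stmt_16 {k : Type*} [CommRing k] (lam : k)
    (Δ : (ℕ →₀ k) →ₗ[k] (ℕ →₀ k) ⊗[k] (ℕ →₀ k))
    (h0 : Δ (uvec 0) = uvec 0 ⊗ₜ[k] uvec 0)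
    (hΔ : ∀ n : ℕ, Δ (uvec (n + 1)) =
      (∑ r ∈ Finset.range (n + 2), uvec r ⊗ₜ[k] (uvec (n + 1 - r) : ℕ →₀ k)) +
        lam • ∑ r ∈ Finset.range (n + 1), uvec r ⊗ₜ[k] (uvec (n - r) : ℕ →₀ k)) :
    ∀ x : ℕ →₀ k,
      (TensorProduct.assoc k (ℕ →₀ k) (ℕ →₀ k) (ℕ →₀ k))
          ((LinearMap.rTensor (ℕ →₀ k) Δ) (Δ x)) =
        (LinearMap.lTensor (ℕ →₀ k) Δ) (Δ x) := by
  have hΔ_eq : Δ = dividedPowerComul k + lam • dividedPowerComul k ∘ₗ shiftDown k := by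
    ext n : 2
    cases n with
    | zero => simpa [uvec, dividedPowerComul_single_one, shiftDown_single_zero] using h0
    | succ n =>
      simpa [uvec, dividedPowerComul_single_one, shiftDown_single_succ,
        Finset.Nat.sum_antidiagonal_eq_sum_range_succ
          (fun i j ↦ (Finsupp.single i 1 : ℕ →₀ k) ⊗ₜ[k] (Finsupp.single j 1 : ℕ →₀ k))] using hΔ n
  intro x
  subst hΔ_eq
  exact LinearMap.congr_fun (coassoc_add_smul_comp lam dividedPowerComul_coassoc
    rTensor_shiftDown_comp_dividedPowerComul lTensor_shiftDown_comp_dividedPowerComul) x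
end

section
/- Let k be a commutative ring, λ ∈ k, and let M be the free k-module with basis {u_n : n ≥ 0} equipped with the product ⋄ determined by u_m ⋄ u_n = Σ_{r=0}^{min(m,n)} C(m+n−r, m)·C(m, r)·(−λ²)^r·u_{m+n−2r}. Define the k-linear map ε : M → k by ε(u_n) = (−λ)^n. Then ε is multiplicative: ε(a ⋄ b) = ε(a)·ε(b) for all a, b ∈ M; equivalently, for all m, n ≥ 0, Σ_{r=0}^{min(m,n)} C(m+n−r, m)·C(m, r)·(−λ²)^r·(−λ)^{m+n−2r} = (−λ)^{m+n}. -/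
open Finset

theorem sum_range_alternating_choose_mul_choose (m n : ℕ) :
    ∑ r ∈ range (m + 1), (-1 : ℤ) ^ r * m.choose r * (m + n - r).choose m = 1 := by
  have h := congr_fun (fwdDiff_iter_choose 0 m) n
  rw [fwdDiff_iter_eq_sum_shift, ← sum_range_reflect, Nat.choose_zero_right, Nat.cast_one] at h
  refine Eq.trans (sum_congr rfl fun r hr => ?_) h
  have hr : r ≤ m := Nat.lt_succ_iff.mp (mem_range.mp hr)
  rw [Nat.add_sub_cancel, Nat.sub_sub_self hr, Nat.choose_symm hr, smul_eq_mul, add_zero,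
    smul_eq_mul, mul_one, show n + (m - r) = m + n - r by omega]

theorem sum_range_min_alternating_choose_mul_choose (m n : ℕ) :
    ∑ r ∈ range (min m n + 1), (-1 : ℤ) ^ r * m.choose r * (m + n - r).choose m = 1 := by
  refine Eq.trans (sum_subset (by gcongr; exact min_le_left m n) fun r hrm hr => ?_)
    (sum_range_alternating_choose_mul_choose m n)
  simp only [mem_range] at hrm hr
  rw [Nat.choose_eq_zero_of_lt (by omega : m + n - r < m), Nat.cast_zero, mul_zero]

theorem sum_choose_mul_choose_mul_neg_sq_pow_mul_neg_pow {k : Type*} [CommRing k] (lam : k)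
    (m n : ℕ) :
    ∑ r ∈ range (min m n + 1),
      (((m + n - r).choose m * m.choose r : ℕ) : k) * (-lam ^ 2) ^ r *
        (-lam) ^ (m + n - 2 * r) = (-lam) ^ (m + n) := by
  have hterm : ∀ r ∈ range (min m n + 1),
      (((m + n - r).choose m * m.choose r : ℕ) : k) * (-lam ^ 2) ^ r * (-lam) ^ (m + n - 2 * r) =
        (((-1 : ℤ) ^ r * m.choose r * (m + n - r).choose m : ℤ) : k) * (-lam) ^ (m + n) := by
    intro r hr
    have h2r : 2 * r ≤ m + n := by simp only [mem_range] at hr; omega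
    rw [← Nat.add_sub_of_le h2r, pow_add, Nat.add_sub_cancel_left, pow_mul, neg_sq,
      neg_pow (lam ^ 2)]
    push_cast
    ring
  rw [sum_congr rfl hterm, ← sum_mul, ← Int.cast_sum, sum_range_min_alternating_choose_mul_choose,
    Int.cast_one, one_mul]

/-- For the modified quasi-shuffle product `⋄` of weight `-λ²` determined by
`u_m ⋄ u_n = Σ_{r=0}^{min(m,n)} C(m+n-r, m) C(m, r) (-λ²)^r • u_{m+n-2r}`, the linear map
`ε(u_n) = (-λ)^n` is multiplicative: `ε(a ⋄ b) = ε(a) ε(b)`; equivalently,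
`Σ_{r=0}^{min(m,n)} C(m+n-r, m) C(m, r) (-λ²)^r (-λ)^{m+n-2r} = (-λ)^{m+n}`. -/
theorem stmt_18 {k : Type*} [CommRing k] (lam : k)
    (D : (ℕ →₀ k) →ₗ[k] (ℕ →₀ k) →ₗ[k] (ℕ →₀ k))
    (hD : ∀ m n : ℕ, D (uvec m) (uvec n) =
      ∑ r ∈ Finset.range (min m n + 1),
        ((((m + n - r).choose m * m.choose r : ℕ) : k) * (-lam ^ 2) ^ r) •
          (uvec (m + n - 2 * r) : ℕ →₀ k))
    (ε : (ℕ →₀ k) →ₗ[k] k)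
    (hε : ∀ n : ℕ, ε (uvec n) = (-lam) ^ n) :
    (∀ a b : ℕ →₀ k, ε (D a b) = ε a * ε b) ∧
    (∀ m n : ℕ,
      ∑ r ∈ Finset.range (min m n + 1),
        (((m + n - r).choose m * m.choose r : ℕ) : k) * (-lam ^ 2) ^ r *
          (-lam) ^ (m + n - 2 * r) = (-lam) ^ (m + n)) := by
  have hcounit := sum_choose_mul_choose_mul_neg_sq_pow_mul_neg_pow lam
  refine ⟨fun a b => ?_, hcounit⟩
  have hbilin : D.compr₂ ε = (LinearMap.mul k k).compl₁₂ ε ε := by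
    refine LinearMap.ext_basis Finsupp.basisSingleOne Finsupp.basisSingleOne fun m n => ?_
    simp only [Finsupp.coe_basisSingleOne, LinearMap.compr₂_apply, LinearMap.compl₁₂_apply,
      LinearMap.mul_apply']
    change ε (D (uvec m) (uvec n)) = ε (uvec m) * ε (uvec n)
    simp only [hD, map_sum, map_smul, hε, smul_eq_mul, ← pow_add, hcounit]
  exact LinearMap.congr_fun₂ hbilin a b
end
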